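/- arXiv:1808.06097 — 6 statements merged into one kernel-verified Lean document; each statement's English description precedes it below -/
import Mathlib

section
/- Let α and β = (β₁,…,β_k) be partitions of n such that lcm(β₁,…,β_k) = p^t for some prime p and integer t > 0. If p does not divide the degree χ^α(1^n), then χ^α(β) ≠ 0. -/
open scoped Classical

/-- A function `α : ℕ → ℕ` (listing the parts, 0-indexed, weakly decreasing,
finitely supported) is a partition of `n`. -/
def IsPartitionFun (α : ℕ → ℕ) (n : ℕ) : Prop :=
  Antitone α ∧ (Function.support α).Finite ∧ ∑ᶠ i, α i = n

/-- A list of parts (weakly decreasing, positive) is a partition of `n`. -/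
def IsPartitionList (β : List ℕ) (n : ℕ) : Prop :=
  β.Pairwise (· ≥ ·) ∧ (∀ b ∈ β, 0 < b) ∧ β.sum = n

/-- The conjugate (transpose) partition: `conjPart α j` is the number of rows `i`
with `α i > j`, i.e. the length of column `j` (0-indexed). -/
noncomputable def conjPart (α : ℕ → ℕ) (j : ℕ) : ℕ :=
  Set.ncard {i | j < α i}

/-- Hook length at the (0-indexed) node `(i, j)`. -/
noncomputable def hookLen (α : ℕ → ℕ) (i j : ℕ) : ℕ :=
  (α i - j) + (conjPart α j - i) - 1

/-- Leg length at the (0-indexed) node `(i, j)`. -/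
noncomputable def legLen (α : ℕ → ℕ) (i j : ℕ) : ℕ :=
  conjPart α j - i - 1

/-- The partition obtained by removing the rim hook of the `(i,j)`-hook. -/
noncomputable def removeHook (α : ℕ → ℕ) (i j : ℕ) : ℕ → ℕ := fun t =>
  if t < i then α t
  else if t + 1 < conjPart α j then α (t + 1) - 1
  else if t + 1 = conjPart α j then j
  else α t

/-- The value `χ^α(β)` of the irreducible character of the symmetric group
indexed by the partition `α`, at the conjugacy class of cycle type `β`,
defined via the Murnaghan–Nakayama rule. -/
noncomputable def charValue (α : ℕ → ℕ) : List ℕ → ℤ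
  | [] => if ∀ i, α i = 0 then 1 else 0
  | b :: rest =>
      ∑ᶠ (i : ℕ), ∑ᶠ (j : ℕ),
        if j < α i ∧ hookLen α i j = b then
          (-1) ^ legLen α i j * charValue (removeHook α i j) rest
        else 0

/-- The degree of `χ^α`, i.e. its value on the identity `(1^n)`. -/
noncomputable def charDegree (α : ℕ → ℕ) (n : ℕ) : ℤ :=
  charValue α (List.replicate n 1)

/-!
Encode a partition `α` with at most `k` parts by its beta-numbers `α i + (k - 1 - i)`, the bead
positions on an abacus with `k` beads. Removing a rim hook of length `b` from `α` is the same as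
sliding one bead down `b` places onto an empty position, and `(-1) ^ leg` is the sign of the
permutation that re-sorts the beads afterwards. On alternating sums of bead placements the
Murnaghan–Nakayama rule therefore reads: `χ^α(β)` is the coefficient of the empty partition in
`S_{β_r} ⋯ S_{β_1}` applied to the alternant of `α`, where `S_b` is the sum over all beads of the
operator moving that bead by `b`. These single-bead moves commute, so over `ZMod p` the Frobenius
identity gives `S_{p^s} = S_1 ^ p ^ s`. Every part of `β` divides `p ^ t`, hence is a power of
`p`, and so `χ^α(β) ≡ χ^α(1^n) (mod p)`.
-/

open Finset Function Equiv

noncomputable section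

variable (R : Type*) [CommRing R] (k : ℕ)

/-- Formal combinations of placements of `k` labelled beads, bead `i` sitting at position `v i`. -/
abbrev Abacus := (Fin k → ℕ) →₀ R

def moveBead (b : ℕ) (i : Fin k) : Module.End R (Abacus R k) :=
  Finsupp.lsum R fun v => if b ≤ v i then Finsupp.lsingle (update v i (v i - b)) else 0

def moveAny (b : ℕ) : Module.End R (Abacus R k) :=
  ∑ i, moveBead R k b i

variable {R k}

lemma moveBead_single (b : ℕ) (i : Fin k) (v : Fin k → ℕ) (r : R) :
    moveBead R k b i (Finsupp.single v r) =
      if b ≤ v i then Finsupp.single (update v i (v i - b)) r else 0 := by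
  rw [moveBead, Finsupp.lsum_single]
  split_ifs <;> rfl

lemma moveBead_mul_moveBead (a b : ℕ) (i : Fin k) :
    moveBead R k a i * moveBead R k b i = moveBead R k (a + b) i := by
  refine Finsupp.lhom_ext fun v r => ?_
  rw [Module.End.mul_apply, moveBead_single, moveBead_single]
  by_cases hb : b ≤ v i
  · by_cases ha : a ≤ v i - b
    · rw [if_pos hb, moveBead_single, update_self, update_idem, if_pos ha, if_pos (by omega),
        Nat.sub_sub, Nat.add_comm b a]
    · rw [if_pos hb, moveBead_single, update_self, if_neg ha, if_neg (by omega)]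
  · rw [if_neg hb, if_neg (by omega), map_zero]

lemma moveBead_zero (i : Fin k) : moveBead R k 0 i = 1 :=
  Finsupp.lhom_ext fun v r => by simp [moveBead_single]

lemma moveBead_one_pow (m : ℕ) (i : Fin k) : moveBead R k 1 i ^ m = moveBead R k m i := by
  induction m with
  | zero => rw [pow_zero, moveBead_zero]
  | succ m ih => rw [pow_succ, ih, moveBead_mul_moveBead]

lemma commute_moveBead (b : ℕ) (i j : Fin k) : Commute (moveBead R k b i) (moveBead R k b j) := by
  rcases eq_or_ne i j with rfl | hij
  · exact Commute.refl _
  refine Finsupp.lhom_ext fun v r => ?_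
  simp only [Module.End.mul_apply, moveBead_single]
  by_cases hi : b ≤ v i <;> by_cases hj : b ≤ v j <;>
    simp [hi, hj, moveBead_single, update_of_ne hij, update_of_ne hij.symm, update_comm hij]

instance {p : ℕ} [CharP R p] : CharP (Module.End R (Abacus R k)) p := by
  refine charP_of_injective_ringHom (f := algebraMap R _) (fun r s hrs => ?_) p
  simpa using congr($hrs (Finsupp.single 0 1) 0)

theorem sum_pow_char_pow_of_commute {S ι : Type*} [Semiring S] (p : ℕ) [Fact p.Prime] [CharP S p]
    (s : Finset ι) (f : ι → S) (h : (s : Set ι).Pairwise fun i j => Commute (f i) (f j)) (n : ℕ) :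
    (∑ i ∈ s, f i) ^ p ^ n = ∑ i ∈ s, f i ^ p ^ n := by
  induction s using Finset.cons_induction with
  | empty => simp [zero_pow (pow_ne_zero n (Fact.out : p.Prime).ne_zero)]
  | cons a s ha ih =>
    rw [coe_cons, Set.pairwise_insert] at h
    rw [sum_cons, sum_cons, add_pow_char_pow_of_commute _ _ (Commute.sum_right _ _ _ fun j hj => ?_),
      ih h.1]
    exact (h.2 j hj (fun hja => ha (hja ▸ hj))).1

lemma moveAny_prime_pow (p : ℕ) [Fact p.Prime] [CharP R p] (s : ℕ) :
    moveAny R k (p ^ s) = moveAny R k 1 ^ p ^ s := by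
  rw [moveAny, moveAny, sum_pow_char_pow_of_commute p _ _ fun i _ j _ _ => commute_moveBead 1 i j]
  simp only [moveBead_one_pow]

variable (R k) in
def alt (v : Fin k → ℕ) : Abacus R k :=
  ∑ σ : Perm (Fin k), (Perm.sign σ : ℤ) • Finsupp.single (v ∘ σ) 1

lemma alt_comp_perm (v : Fin k → ℕ) (τ : Perm (Fin k)) :
    alt R k (v ∘ τ) = (Perm.sign τ : ℤ) • alt R k v := by
  rw [alt, alt, smul_sum]
  refine Fintype.sum_equiv (Equiv.mulLeft τ) _ _ fun σ => ?_
  rw [coe_mulLeft, Perm.coe_mul, Perm.sign_mul, smul_smul, Units.val_mul, ← mul_assoc,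
    ← Units.val_mul, Int.units_mul_self, Units.val_one, one_mul]
  rfl

lemma alt_eq_zero_of_not_injective {v : Fin k → ℕ} (hv : ¬ Injective v) : alt R k v = 0 := by
  obtain ⟨a, b, hab, hne⟩ : ∃ a b, v a = v b ∧ a ≠ b := by
    simpa [Injective] using hv
  have hswap : v ∘ swap a b = v := funext fun t => by
    rcases eq_or_ne t a with rfl | hta
    · simp [hab]
    rcases eq_or_ne t b with rfl | htb
    · simp [hab]
    · simp [swap_apply_of_ne_of_ne hta htb]
  refine sum_involution (fun σ _ => swap a b * σ) (fun σ _ => ?_) (fun σ _ _ h => ?_)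
    (fun _ _ => mem_univ _) (fun σ _ => swap_mul_self_mul a b σ)
  · rw [Perm.coe_mul, ← comp_assoc, hswap, Perm.sign_mul, Perm.sign_swap hne, Units.val_mul,
      Units.val_neg, Units.val_one, neg_one_mul, neg_smul, add_neg_cancel]
  · exact hne (swap_eq_one_iff.mp (mul_eq_right.mp h))

lemma alt_apply_of_strictAnti {v u : Fin k → ℕ} (hv : StrictAnti v) (hu : StrictAnti u) :
    alt R k v u = if v = u then 1 else 0 := by
  have eq_one_of_comp_eq {σ : Perm (Fin k)} (hσ : v ∘ σ = u) : σ = 1 := by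
    have hmono : StrictMono σ := fun s t hst => by
      have := hu hst
      rw [← hσ] at this
      exact hv.lt_iff_gt.mp this
    exact DFunLike.coe_injective hmono.eq_id
  rw [alt, Finsupp.finsetSum_apply, sum_eq_single 1 (fun σ _ hσ => ?_) (by simp)]
  · simp [Finsupp.single_apply]
  · rw [Finsupp.smul_apply, Finsupp.single_apply, if_neg (fun h => hσ (eq_one_of_comp_eq h)),
      smul_zero]

lemma moveAny_alt (b : ℕ) (v : Fin k → ℕ) :
    moveAny R k b (alt R k v) =
      ∑ j, if b ≤ v j then alt R k (update v j (v j - b)) else 0 := by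
  have hupd (σ : Perm (Fin k)) (i : Fin k) (x : ℕ) :
      update (v ∘ σ) i x = update v (σ i) x ∘ σ :=
    (update_comp_eq_of_injective v σ.injective i x).symm
  calc moveAny R k b (alt R k v)
      = ∑ σ : Perm (Fin k), ∑ i, (Perm.sign σ : ℤ) •
          (if b ≤ v (σ i) then Finsupp.single (update v (σ i) (v (σ i) - b) ∘ σ) (1 : R)
            else 0) := by
        simp only [moveAny, LinearMap.sum_apply, alt, map_sum, map_zsmul, moveBead_single,
          comp_apply, hupd, smul_sum]
    _ = ∑ σ : Perm (Fin k), ∑ j, (Perm.sign σ : ℤ) •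
          (if b ≤ v j then Finsupp.single (update v j (v j - b) ∘ σ) (1 : R) else 0) :=
        sum_congr rfl fun σ _ => Equiv.sum_comp σ fun j => (Perm.sign σ : ℤ) •
          (if b ≤ v j then Finsupp.single (update v j (v j - b) ∘ σ) (1 : R) else 0)
    _ = _ := by
        rw [sum_comm]
        refine sum_congr rfl fun j _ => ?_
        split_ifs <;> simp [alt]

def betaNums (α : ℕ → ℕ) (k : ℕ) : Fin k → ℕ := fun i => α i + (k - 1 - i)

section BetaNumbers

variable {α : ℕ → ℕ} {k : ℕ}

lemma strictAnti_betaNums (hα : Antitone α) : StrictAnti (betaNums α k) := fun i j hij => by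
  have := hα hij.le
  have := j.2
  simp only [betaNums]
  omega

lemma betaNums_eq_betaNums_zero_iff : betaNums α k = betaNums 0 k ↔ ∀ i < k, α i = 0 := by
  simp [funext_iff, betaNums, Fin.forall_iff]

lemma lt_apply_iff_lt_conjPart (hα : Antitone α) (hz : ∀ i, k ≤ i → α i = 0) (j t : ℕ) :
    j < α t ↔ t < conjPart α j := by
  have hex : ∃ i, α i ≤ j := ⟨k, by simp [hz k le_rfl]⟩
  have hset : {i | j < α i} = Set.Iio (Nat.find hex) := by
    ext i
    simp only [Set.mem_ofPred_eq, Set.mem_Iio, Nat.lt_find_iff, not_le]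
    exact ⟨fun hi m hm => hi.trans_le (hα hm), fun h => h i le_rfl⟩
  rw [conjPart, hset, ← Finset.coe_Iio, Set.ncard_coe_finset, Nat.card_Iio]
  exact Set.ext_iff.mp hset t

lemma conjPart_le (hα : Antitone α) (hz : ∀ i, k ≤ i → α i = 0) (j : ℕ) : conjPart α j ≤ k := by
  by_contra h
  have := (lt_apply_iff_lt_conjPart hα hz j k).mpr (by omega)
  rw [hz k le_rfl] at this
  omega

lemma hookLen_add (hα : Antitone α) (hz : ∀ i, k ≤ i → α i = 0) {x j : ℕ} (hj : j < α x) :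
    hookLen α x j + j + x + 1 = α x + conjPart α j := by
  have := (lt_apply_iff_lt_conjPart hα hz j x).mp hj
  unfold hookLen
  omega

lemma strictAntiOn_hookLen (hα : Antitone α) (hz : ∀ i, k ≤ i → α i = 0) (x : ℕ) :
    StrictAntiOn (hookLen α x) (Set.Iio (α x)) := by
  intro j _ j' hj' hjj'
  have hc : conjPart α j' ≤ conjPart α j := by
    by_contra h
    have := (lt_apply_iff_lt_conjPart hα hz j' _).mpr (not_le.mp h)
    have := (lt_apply_iff_lt_conjPart hα hz j (conjPart α j)).mp (by omega)
    omega
  have := hookLen_add hα hz (Set.mem_Iio.mp hj')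
  have := hookLen_add hα hz (hjj'.trans (Set.mem_Iio.mp hj'))
  omega

lemma betaNums_eq_hookLen_add (hα : Antitone α) (hz : ∀ i, k ≤ i → α i = 0) {x : Fin k} {j : ℕ}
    (hj : j < α x) : betaNums α k x = hookLen α x j + (k - conjPart α j + j) := by
  have := hookLen_add hα hz hj
  have := conjPart_le hα hz j
  have := x.2
  simp only [betaNums]
  omega

lemma exists_hookLen_eq (hα : Antitone α) (hz : ∀ i, k ≤ i → α i = 0) {x : Fin k} {b : ℕ}
    (hb : b ≤ betaNums α k x) (hfree : ∀ y, betaNums α k y ≠ betaNums α k x - b) :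
    ∃ j < α x, hookLen α x j = b := by
  have hbx : betaNums α k x = α x + (k - 1 - x) := rfl
  have hx := x.2
  obtain ⟨q, hq⟩ : ∃ q, betaNums α k x - b = q := ⟨_, rfl⟩
  rw [hq] at hfree
  -- the rows `t` whose bead lies below `q` are exactly those with `c ≤ t`
  obtain ⟨c, hc, hck, hmin⟩ : ∃ c, α c + k ≤ q + c ∧ c ≤ k ∧ ∀ t < c, q + t < α t + k := by
    have hex : ∃ t, α t + k ≤ q + t := ⟨k, by rw [hz k le_rfl]; omega⟩
    exact ⟨Nat.find hex, Nat.find_spec hex, Nat.find_min' hex (by rw [hz k le_rfl]; omega),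
      fun t ht => not_le.mp (Nat.find_min hex ht)⟩
  have hxc : x < c := Nat.lt_of_not_le fun h => by have := hα h; omega
  have hlast : q + c + 1 ≤ α (c - 1) + k := by
    have := hmin (c - 1) (by omega)
    have := hfree ⟨c - 1, by omega⟩
    simp only [betaNums] at this
    omega
  have := hα (show x.1 ≤ c - 1 by omega)
  refine ⟨q + c - k, by omega, ?_⟩
  have hconj : conjPart α (q + c - k) = c := by
    refine eq_of_forall_lt_iff fun t => ?_
    rw [← lt_apply_iff_lt_conjPart hα hz]
    constructor
    · intro ht
      by_contra htc
      have := hα (not_lt.mp htc)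
      omega
    · intro htc
      have := hα (show t ≤ c - 1 by omega)
      omega
  rw [hookLen, hconj]
  omega

end BetaNumbers

section RemoveHook

variable {α : ℕ → ℕ} {k x j : ℕ}

lemma antitone_removeHook (hα : Antitone α) (hz : ∀ i, k ≤ i → α i = 0) (hj : j < α x) :
    Antitone (removeHook α x j) := by
  have hconj := lt_apply_iff_lt_conjPart hα hz j
  have := (hconj x).mp hj
  refine antitone_nat_of_succ_le fun t => ?_
  have := hconj t
  have := hconj (t + 1)
  have := hconj (t + 1 + 1)
  have := hα (show t ≤ t + 1 by omega)
  have := hα (show t + 1 ≤ t + 1 + 1 by omega)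
  simp only [removeHook]
  split_ifs <;> omega

lemma removeHook_of_le (hα : Antitone α) (hz : ∀ i, k ≤ i → α i = 0) (hx : x < k) {i : ℕ}
    (hi : k ≤ i) : removeHook α x j i = 0 := by
  have := conjPart_le hα hz j
  simp only [removeHook]
  split_ifs <;> first | omega | exact hz i hi

lemma betaNums_removeHook (hα : Antitone α) (hz : ∀ i, k ≤ i → α i = 0) {x y : Fin k}
    (hj : j < α x) (hy : (y : ℕ) = conjPart α j - 1) :
    betaNums (removeHook α x j) k =
      update (betaNums α k) x (k - conjPart α j + j) ∘ Fin.cycleIcc x y := by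
  have hconj := lt_apply_iff_lt_conjPart hα hz j
  have := (hconj x).mp hj
  have : NeZero k := ⟨by omega⟩
  have hxy : x ≤ y := Fin.le_def.mpr (by omega)
  funext t
  have ht := t.2
  rcases lt_or_ge t x with htx | hxt
  · rw [comp_apply, Fin.cycleIcc_of_lt htx, update_of_ne htx.ne]
    have htx' : (t : ℕ) < x := htx
    simp only [betaNums, removeHook, if_pos htx']
  rcases le_or_gt t y with hty | hyt
  · rw [comp_apply, Fin.cycleIcc_of_le_of_le hxt hty]
    split_ifs with hty'
    · have htv : (t : ℕ) = conjPart α j - 1 := by rw [hty', hy]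
      rw [hty', update_self]
      simp only [betaNums, removeHook]
      split_ifs <;> omega
    · have htk : (t : ℕ) + 1 < k := by
        have := Fin.le_def.mp hty
        have := Fin.val_ne_iff.mpr hty'
        omega
      simp only [update_apply, Fin.ext_iff, betaNums, removeHook, Fin.val_add_one_of_lt' htk]
      simp only [Fin.le_def, Fin.ext_iff] at hxt hty hty'
      have := hconj (t + 1)
      split_ifs <;> omega
  · rw [comp_apply, Fin.cycleIcc_of_gt hyt, update_of_ne (hxy.trans_lt hyt).ne']
    simp only [betaNums, removeHook]
    simp only [Fin.lt_def, Fin.le_def] at hxt hyt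
    have := hconj t
    split_ifs <;> omega

lemma exists_perm_betaNums_removeHook (hα : Antitone α) (hz : ∀ i, k ≤ i → α i = 0)
    {x : Fin k} (hj : j < α x) :
    ∃ σ : Perm (Fin k), (Perm.sign σ : ℤ) = (-1) ^ legLen α x j ∧
      betaNums (removeHook α x j) k = update (betaNums α k) x (k - conjPart α j + j) ∘ σ := by
  have := (lt_apply_iff_lt_conjPart hα hz j x).mp hj
  have := conjPart_le hα hz j
  obtain ⟨y, hy⟩ : ∃ y : Fin k, (y : ℕ) = conjPart α j - 1 := ⟨⟨_, by omega⟩, rfl⟩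
  refine ⟨Fin.cycleIcc x y, ?_, betaNums_removeHook hα hz hj hy⟩
  rw [Fin.sign_cycleIcc_of_le (Fin.le_def.mpr (by omega)), legLen, hy, Nat.sub_right_comm]
  simp

end RemoveHook

section MurnaghanNakayama

variable {α : ℕ → ℕ} {k : ℕ}

lemma ite_alt_update_betaNums (hα : Antitone α) (hz : ∀ i, k ≤ i → α i = 0) (x : Fin k) {b : ℕ}
    (hb : 0 < b) :
    (if b ≤ betaNums α k x then alt R k (update (betaNums α k) x (betaNums α k x - b)) else 0) =
      ∑ j ∈ range (α x), if hookLen α x j = b then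
        ((-1) ^ legLen α x j : ℤ) • alt R k (betaNums (removeHook α x j) k) else 0 := by
  by_cases hhook : ∃ j < α x, hookLen α x j = b
  · obtain ⟨j, hj, rfl⟩ := hhook
    have hv := betaNums_eq_hookLen_add hα hz hj
    obtain ⟨σ, hσ, hrem⟩ := exists_perm_betaNums_removeHook hα hz hj
    rw [if_pos (by omega), sum_eq_single_of_mem j (mem_range.mpr hj) fun j' hj' hne =>
        if_neg fun h => hne ((strictAntiOn_hookLen hα hz x).injOn (mem_range.mp hj') hj h),
      if_pos rfl, hrem, alt_comp_perm, hσ, smul_smul, ← pow_add, ← two_mul, pow_mul, neg_one_sq,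
      one_pow, one_smul]
    congr 2
    omega
  · simp only [not_exists, not_and] at hhook
    rw [sum_eq_zero fun j hj => if_neg (hhook j (mem_range.mp hj))]
    split_ifs with hbv
    · obtain ⟨y, hy⟩ : ∃ y, betaNums α k y = betaNums α k x - b := by
        by_contra! hfree
        obtain ⟨j, hj, hjb⟩ := exists_hookLen_eq hα hz hbv hfree
        exact hhook j hj hjb
      have hyx : y ≠ x := by
        rintro rfl
        omega
      refine alt_eq_zero_of_not_injective fun hinj => hyx (hinj ?_)
      rw [update_self, update_of_ne hyx, hy]
    · rfl

theorem moveAny_alt_betaNums (hα : Antitone α) (hz : ∀ i, k ≤ i → α i = 0) {b : ℕ} (hb : 0 < b) :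
    moveAny R k b (alt R k (betaNums α k)) =
      ∑ x : Fin k, ∑ j ∈ range (α x), if hookLen α x j = b then
        ((-1) ^ legLen α x j : ℤ) • alt R k (betaNums (removeHook α x j) k) else 0 := by
  rw [moveAny_alt]
  exact sum_congr rfl fun x _ => ite_alt_update_betaNums hα hz x hb

lemma charValue_cons (hz : ∀ i, k ≤ i → α i = 0) (b : ℕ) (β : List ℕ) :
    charValue α (b :: β) = ∑ i ∈ range k, ∑ j ∈ range (α i),
      if hookLen α i j = b then (-1) ^ legLen α i j * charValue (removeHook α i j) β else 0 := by
  rw [charValue, finsum_eq_sum_of_support_subset _ (s := range k) fun i hi => ?_]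
  · refine sum_congr rfl fun i _ => ?_
    rw [finsum_eq_sum_of_support_subset _ (s := range (α i)) fun j hj => ?_]
    · exact sum_congr rfl fun j hj => by simp [mem_range.mp hj]
    · by_contra h
      exact hj (if_neg fun hjb => h (mem_range.mpr hjb.1))
  · by_contra h
    refine hi (finsum_eq_zero_of_forall_eq_zero fun j => if_neg fun hjb => ?_)
    rw [hz i (by simpa using h)] at hjb
    exact Nat.not_lt_zero _ hjb.1

variable (R k) in
def moveSeq : List ℕ → Module.End R (Abacus R k)
  | [] => 1
  | b :: β => moveSeq β * moveAny R k b

theorem cast_charValue_eq_moveSeq_alt : ∀ (β : List ℕ), (∀ b ∈ β, 0 < b) → ∀ α : ℕ → ℕ,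
    Antitone α → (∀ i, k ≤ i → α i = 0) →
    (charValue α β : R) = moveSeq R k β (alt R k (betaNums α k)) (betaNums 0 k)
  | [], _, α, hα, hz => by
    have hzero : (∀ i, α i = 0) ↔ ∀ i < k, α i = 0 :=
      ⟨fun h i _ => h i, fun h i => (lt_or_ge i k).elim (h i) (hz i)⟩
    rw [charValue, moveSeq, Module.End.one_apply, alt_apply_of_strictAnti (strictAnti_betaNums hα)
      (strictAnti_betaNums (α := 0) fun _ _ _ => le_rfl)]
    simp only [betaNums_eq_betaNums_zero_iff, ← hzero]
    split_ifs <;> simp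
  | b :: β, hpos, α, hα, hz => by
    rw [charValue_cons hz, moveSeq, Module.End.mul_apply,
      moveAny_alt_betaNums hα hz (hpos b List.mem_cons_self), ← Fin.sum_univ_eq_sum_range]
    simp only [Int.cast_sum, map_sum, Finsupp.finsetSum_apply]
    refine sum_congr rfl fun x _ => sum_congr rfl fun j hj => ?_
    split_ifs
    · rw [map_zsmul, Finsupp.smul_apply, ← cast_charValue_eq_moveSeq_alt β
        (fun c hc => hpos c (List.mem_cons_of_mem _ hc)) _
        (antitone_removeHook hα hz (mem_range.mp hj)) fun i hi => removeHook_of_le hα hz x.2 hi]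
      simp
    · simp

end MurnaghanNakayama

lemma moveSeq_eq_moveAny_one_pow (p : ℕ) [Fact p.Prime] [CharP R p] (β : List ℕ)
    (hβ : ∀ b ∈ β, ∃ s, b = p ^ s) : moveSeq R k β = moveAny R k 1 ^ β.sum := by
  induction β with
  | nil => rfl
  | cons b β ih =>
    obtain ⟨s, rfl⟩ := hβ b List.mem_cons_self
    rw [moveSeq, ih fun c hc => hβ c (List.mem_cons_of_mem _ hc), moveAny_prime_pow p, ← pow_add,
      List.sum_cons, add_comm]

lemma IsPartitionFun.apply_eq_zero {α : ℕ → ℕ} {n : ℕ} (hα : IsPartitionFun α n) {i : ℕ}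
    (hi : n ≤ i) : α i = 0 := by
  obtain ⟨hanti, hfin, hsum⟩ := hα
  by_contra h
  have hpos : ∀ t ∈ range (i + 1), 1 ≤ α t := fun t ht => by
    have := hanti (mem_range_succ_iff.mp ht)
    omega
  have hsub : range (i + 1) ⊆ hfin.toFinset := fun t ht =>
    hfin.mem_toFinset.mpr (Nat.one_le_iff_ne_zero.mp (hpos t ht))
  have := (card_nsmul_le_sum _ _ 1 hpos).trans (sum_le_sum_of_subset hsub)
  rw [← finsum_eq_sum α hfin, hsum, card_range, smul_eq_mul, mul_one] at this
  omega

theorem charValue_modEq_charDegree {α : ℕ → ℕ} {β : List ℕ} {n p : ℕ} [Fact p.Prime]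
    (hα : IsPartitionFun α n) (hpos : ∀ b ∈ β, 0 < b) (hsum : β.sum = n)
    (hβ : ∀ b ∈ β, ∃ s, b = p ^ s) : charValue α β ≡ charDegree α n [ZMOD p] := by
  have hz : ∀ i, n ≤ i → α i = 0 := fun i => hα.apply_eq_zero
  rw [← ZMod.intCast_eq_intCast_iff, charDegree,
    cast_charValue_eq_moveSeq_alt β hpos α hα.1 hz, cast_charValue_eq_moveSeq_alt _
      (fun b hb => by rw [List.eq_of_mem_replicate hb]; exact one_pos) α hα.1 hz,
    moveSeq_eq_moveAny_one_pow p β hβ, moveSeq_eq_moveAny_one_pow p _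
      fun b hb => ⟨0, by rw [List.eq_of_mem_replicate hb, pow_zero]⟩,
    hsum, List.sum_replicate, smul_eq_mul, mul_one]

end

theorem stmt_3_general (n : ℕ) (α : ℕ → ℕ) (β : List ℕ) (p t : ℕ)
    (hp : p.Prime)
    (hα : IsPartitionFun α n) (hβ : IsPartitionList β n)
    (hlcm : β.foldr Nat.lcm 1 = p ^ t)
    (h : ¬ (p : ℤ) ∣ charDegree α n) :
    charValue α β ≠ 0 := by
  have : Fact p.Prime := ⟨hp⟩
  have hβp : ∀ b ∈ β, ∃ s, b = p ^ s := fun b hb => by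
    have hdvd : b ∣ p ^ t := hlcm ▸ Multiset.dvd_lcm (s := (β : Multiset ℕ)) hb
    obtain ⟨s, -, rfl⟩ := (Nat.dvd_prime_pow hp).mp hdvd
    exact ⟨s, rfl⟩
  intro hzero
  have hmod := charValue_modEq_charDegree hα hβ.2.1 hβ.2.2 hβp
  rw [hzero] at hmod
  exact h (Int.modEq_zero_iff_dvd.mp hmod.symm)

/-- If `lcm` of the parts of `β` is a prime power `p ^ t` and `p` does not divide
the degree of `χ^α`, then `χ^α(β) ≠ 0`. -/
theorem stmt_3 (n : ℕ) (α : ℕ → ℕ) (β : List ℕ) (p t : ℕ)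
    (hp : p.Prime) (ht : 0 < t)
    (hα : IsPartitionFun α n) (hβ : IsPartitionList β n)
    (hlcm : β.foldr Nat.lcm 1 = p ^ t)
    (h : ¬ (p : ℤ) ∣ charDegree α n) :
    charValue α β ≠ 0 :=
  stmt_3_general n α β p t hp hα hβ hlcm h
end

section
/- Let α = (α₁, 1^{n−α₁}) be a hook partition of n with n − α₁ ≥ α₁ > 1. If β is a partition of n of the form (β₁,…,β_r, α₁, 1) where each β_i ≥ α₁, then χ^α(β) = 0. -/
/-!
In the Murnaghan–Nakayama recursion for the hook `(a, 1^m)`, a part `b ≥ a` with `b ≠ a + m`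
can only be removed as the bottom `b` cells of the leg, leaving `(a, 1^(m-b))`. Since
`n - a = ΣL + 1`, stripping the parts of `L` leads to `(a, 1)`, which has no rim hook of
length `a` when `a > 1`: its hooks have lengths `a + 1`, `1` and those `< a` in the arm.
-/

open scoped Classical

def hookShape (a m : ℕ) : ℕ → ℕ := fun i => if i = 0 then a else if i < m + 1 then 1 else 0

lemma conjPart_hookShape {a : ℕ} (ha : 1 ≤ a) (m j : ℕ) :
    conjPart (hookShape a m) j = if j = 0 then m + 1 else if j < a then 1 else 0 := by
  unfold conjPart
  split_ifs
  · rw [show {i | j < hookShape a m i} = ↑(Finset.range (m + 1)) by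
      ext i; simp only [hookShape, Set.mem_ofPred_eq, Finset.coe_range, Set.mem_Iio]
      split_ifs <;> omega]
    rw [Set.ncard_coe_finset, Finset.card_range]
  · rw [show {i | j < hookShape a m i} = {0} by
      ext i; simp only [hookShape, Set.mem_ofPred_eq, Set.mem_singleton_iff]
      split_ifs <;> omega]
    exact Set.ncard_singleton 0
  · rw [show {i | j < hookShape a m i} = ∅ by
      ext i; simp only [hookShape, Set.mem_ofPred_eq, Set.mem_empty_iff_false, iff_false]
      split_ifs <;> omega]
    exact Set.ncard_empty _

lemma lt_hookShape_and_hookLen_eq_iff {a m b i j : ℕ} (ha : 1 ≤ a) (hab : a ≤ b)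
    (hne : b ≠ a + m) :
    j < hookShape a m i ∧ hookLen (hookShape a m) i j = b ↔
      j = 0 ∧ b ≤ m ∧ i = m + 1 - b := by
  rw [hookLen, conjPart_hookShape ha]
  simp only [hookShape]
  split_ifs <;> omega

lemma legLen_hookShape_zero {a : ℕ} (ha : 1 ≤ a) (m i : ℕ) :
    legLen (hookShape a m) i 0 = m - i := by
  rw [legLen, conjPart_hookShape ha, if_pos rfl]
  omega

lemma removeHook_hookShape_zero {a m i : ℕ} (ha : 1 ≤ a) (hi : 1 ≤ i) (him : i ≤ m) :
    removeHook (hookShape a m) i 0 = hookShape a (i - 1) := by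
  funext t
  simp only [removeHook, conjPart_hookShape ha, hookShape, Nat.add_one_ne_zero, if_true,
    if_false]
  split_ifs <;> omega

lemma charValue_hookShape_cons {a m b : ℕ} (ha : 1 ≤ a) (hab : a ≤ b) (hne : b ≠ a + m)
    (rest : List ℕ) :
    charValue (hookShape a m) (b :: rest) =
      if b ≤ m then (-1) ^ (b - 1) * charValue (hookShape a (m - b)) rest else 0 := by
  rw [charValue]
  simp_rw [lt_hookShape_and_hookLen_eq_iff ha hab hne]
  split_ifs with hbm
  · rw [finsum_eq_single _ (m + 1 - b) fun i hi => by simp [hi]]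
    rw [finsum_eq_single _ 0 fun j hj => by simp [hj]]
    rw [if_pos ⟨rfl, hbm, rfl⟩, legLen_hookShape_zero ha,
      removeHook_hookShape_zero ha (by omega) (by omega),
      show m - (m + 1 - b) = b - 1 by omega, show m + 1 - b - 1 = m - b by omega]
  · simp [hbm]

lemma charValue_hookShape_append {a : ℕ} (ha : 1 ≤ a) (m : ℕ) (rest : List ℕ) :
    ∀ L : List ℕ, (∀ b ∈ L, a ≤ b) →
      charValue (hookShape a (L.sum + m)) (L ++ rest) =
        (-1) ^ (L.sum + L.length) * charValue (hookShape a m) rest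
  | [], _ => by simp
  | b :: L, hL => by
    have hb : a ≤ b := hL b List.mem_cons_self
    have ih := charValue_hookShape_append ha m rest L fun c hc => hL c (List.mem_cons_of_mem b hc)
    rw [List.sum_cons, List.cons_append, List.length_cons,
      charValue_hookShape_cons ha hb (by omega), if_pos (by omega),
      show b + L.sum + m - b = L.sum + m by omega, ih,
      show b + L.sum + (L.length + 1) = (b - 1) + (L.sum + L.length) + 2 by omega]
    simp only [pow_add]
    ring

lemma charValue_hookShape_cons_self {a m : ℕ} (hm : 0 < m) (hma : m < a) (rest : List ℕ) :
    charValue (hookShape a m) (a :: rest) = 0 := by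
  rw [charValue_hookShape_cons (by omega) le_rfl (by omega), if_neg (by omega)]

theorem stmt_7_general (n a : ℕ) (ha : 1 < a)
    (L : List ℕ) (hL : ∀ b ∈ L, a ≤ b)
    (hβ : IsPartitionList (L ++ [a, 1]) n) :
    charValue (fun i => if i = 0 then a else if i < n - a + 1 then 1 else 0)
      (L ++ [a, 1]) = 0 := by
  have hn : n - a = L.sum + 1 := by
    have := hβ.2.2
    simp only [List.sum_append, List.sum_cons, List.sum_nil] at this
    omega
  change charValue (hookShape a (n - a)) (L ++ [a, 1]) = 0
  rw [hn, charValue_hookShape_append (by omega) 1 [a, 1] L hL,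
    charValue_hookShape_cons_self one_pos ha, mul_zero]

/-- For a hook `α = (a, 1^{n-a})` with `n - a ≥ a > 1` and
`β = (β₁, …, β_r, a, 1)` with all `βᵢ ≥ a`, one has `χ^α(β) = 0`. -/
theorem stmt_7 (n a : ℕ) (ha : 1 < a) (han : a ≤ n - a)
    (L : List ℕ) (hL : ∀ b ∈ L, a ≤ b)
    (hβ : IsPartitionList (L ++ [a, 1]) n) :
    charValue (fun i => if i = 0 then a else if i < n - a + 1 then 1 else 0)
      (L ++ [a, 1]) = 0 :=
  stmt_7_general n a ha L hL hβ
end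

section
/- Let α be a self-conjugate partition of n and β a partition of n having an even part β₁ with β₁ > n/2. Then χ^α(β) = 0. -/
open scoped Classical

/-!
For a self-conjugate `α` the principal hook has odd length `2 α₀ - 1`, and every other hook has
length at most `α₀ + α₁ - 2`. The first two rows and the first two columns of the diagram contain
at least `2 (α₀ + α₁) - 4` of its `n` cells, so `α` has no hook of even length `x > n / 2`. Such
an `x` is the first part of `β`, and the Murnaghan–Nakayama rule finds no rim hook to remove.
-/

theorem List.Pairwise.eq_cons_of_sum_lt_two_mul {β : List ℕ} {x : ℕ}
    (hβ : β.Pairwise (· ≥ ·)) (hx : x ∈ β) (h : β.sum < 2 * x) : ∃ rest, β = x :: rest := by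
  cases β with
  | nil => simp at hx
  | cons b rest =>
    refine ⟨rest, ?_⟩
    rcases List.mem_cons.mp hx with rfl | hx
    · rfl
    · have hbx : x ≤ b := List.rel_of_pairwise_cons hβ hx
      have hx_le : x ≤ rest.sum := List.le_sum_of_mem hx
      simp only [List.sum_cons] at h
      omega

section Partition

variable {α : ℕ → ℕ}

theorem conjPart_eq_card_filter {s : Finset ℕ} (hs : Function.support α ⊆ s) (c : ℕ) :
    conjPart α c = (s.filter (fun i => c < α i)).card := by
  rw [conjPart, ← Set.ncard_coe_finset]
  congr 1
  ext i
  simp only [Set.mem_ofPred_eq, Finset.coe_filter, iff_and_self]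
  exact fun h => hs (by simp only [Function.mem_support]; omega)

/-- The first two rows and the first two columns of a diagram overlap in at most four cells. -/
theorem conjPart_zero_add_conjPart_one_add_le (hfin : (Function.support α).Finite) :
    conjPart α 0 + conjPart α 1 + (α 0 - 2) + (α 1 - 2) ≤ ∑ᶠ i, α i := by
  set s := hfin.toFinset ∪ Finset.range 2
  have hs : Function.support α ⊆ s := fun i hi => by simp [s, hi]
  have hsplit : ∀ i,
      (if 0 < α i then 1 else 0) + (if 1 < α i then 1 else 0) + (α i - 2) = α i := by
    intro i
    split_ifs <;> omega
  calc conjPart α 0 + conjPart α 1 + (α 0 - 2) + (α 1 - 2)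
      = conjPart α 0 + conjPart α 1 + ∑ i ∈ Finset.range 2, (α i - 2) := by
        simp [Finset.sum_range_succ, add_assoc]
    _ ≤ conjPart α 0 + conjPart α 1 + ∑ i ∈ s, (α i - 2) := by
        gcongr
        exact Finset.subset_union_right
    _ = ∑ᶠ i, α i := by
        rw [finsum_eq_sum_of_support_subset α hs, conjPart_eq_card_filter hs,
          conjPart_eq_card_filter hs, Finset.card_filter, Finset.card_filter,
          ← Finset.sum_add_distrib, ← Finset.sum_add_distrib]
        exact Finset.sum_congr rfl fun i _ => hsplit i

theorem odd_hookLen_zero_zero (hsc : conjPart α = α) (h : 0 < α 0) : Odd (hookLen α 0 0) := by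
  rw [hookLen, hsc]
  exact ⟨α 0 - 1, by omega⟩

theorem hookLen_add_two_le (hmono : Antitone α) (hsc : conjPart α = α) {i j : ℕ}
    (hij : j < α i) (hne : i ≠ 0 ∨ j ≠ 0) : hookLen α i j + 2 ≤ α 0 + α 1 := by
  rw [hookLen, hsc]
  have hi0 : α i ≤ α 0 := hmono (Nat.zero_le i)
  have hj0 : α j ≤ α 0 := hmono (Nat.zero_le j)
  have hi1 : i ≠ 0 → α i ≤ α 1 := fun hi => hmono (by omega)
  have hj1 : j ≠ 0 → α j ≤ α 1 := fun hj => hmono (by omega)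
  omega

theorem charValue_cons_eq_zero {b : ℕ} (rest : List ℕ)
    (h : ∀ i j, j < α i → hookLen α i j ≠ b) : charValue α (b :: rest) = 0 := by
  rw [charValue]
  exact finsum_eq_zero_of_forall_eq_zero fun i => finsum_eq_zero_of_forall_eq_zero fun j =>
    if_neg fun ⟨hij, hb⟩ => h i j hij hb

end Partition

/-- If `α` is self-conjugate and `β` has an even part `x > n / 2`, then `χ^α(β) = 0`. -/
theorem stmt_11 (n : ℕ) (α : ℕ → ℕ) (hα : IsPartitionFun α n) (hsc : conjPart α = α)
    (β : List ℕ) (hβ : IsPartitionList β n)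
    (x : ℕ) (hx : x ∈ β) (hev : Even x) (hbig : n < 2 * x) :
    charValue α β = 0 := by
  obtain ⟨hmono, hfin, hsum⟩ := hα
  obtain ⟨hsort, -, hβsum⟩ := hβ
  obtain ⟨rest, rfl⟩ := hsort.eq_cons_of_sum_lt_two_mul hx (hβsum ▸ hbig)
  refine charValue_cons_eq_zero rest fun i j hij hhook => ?_
  by_cases h00 : i = 0 ∧ j = 0
  · obtain ⟨rfl, rfl⟩ := h00
    exact Nat.not_even_iff_odd.2 (odd_hookLen_zero_zero hsc hij) (hhook ▸ hev)
  · have hcells := conjPart_zero_add_conjPart_one_add_le hfin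
    rw [hsc, hsum] at hcells
    have hhook_le := hookLen_add_two_le hmono hsc hij (by tauto)
    omega
end

section
/- Let α = (r₁^{k₁},…,r_m^{k_m}) be a self-conjugate partition of n with distinct parts r₁ > ⋯ > r_m and multiplicities k_i > 0. Then r_i = k₁ + k₂ + ⋯ + k_{m−i+1} for all 1 ≤ i ≤ m, and equivalently k_i = r_{m−i+1} − r_{m−i+2} for 1 ≤ i ≤ m (with r_{m+1} = 0). -/
open scoped Classical

/-! Put `K i = k₁ + ⋯ + kᵢ`. The rows of `α` of length at least `rᵢ` are the `K i` rows whose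
length is one of `r₁, …, rᵢ`, so column `rᵢ - 1` of `α` has length `K i`; by self-conjugacy
`K i = α (rᵢ - 1)` is itself a part of `α`, hence one of the `r`'s. As `i` runs over `1, …, m`,
`K i` increases and `rᵢ` decreases through the same `m`-element set, which forces
`rᵢ = K (m + 1 - i)`; the formula for `kᵢ` follows by taking differences. -/

theorem StrictAntiOn.eq_rev_of_mapsTo_image {β : Type*} [LinearOrder β] {m : ℕ} {r K : ℕ → β}
    (hr : StrictAntiOn r (Set.Icc 1 m)) (hK : StrictMonoOn K (Set.Icc 1 m))
    (hKr : Set.MapsTo K (Set.Icc 1 m) (r '' Set.Icc 1 m)) {i : ℕ} (hi : i ∈ Set.Icc 1 m) :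
    r i = K (m + 1 - i) := by
  set s := (Finset.Icc 1 m).image r
  have hs : s.card = m := by
    rw [Finset.card_image_of_injOn (by simpa using hr.injOn), Nat.card_Icc, Nat.add_sub_cancel]
  have hKs : StrictMono fun x : Fin m => K (x + 1) := fun x y hxy =>
    hK ⟨by omega, by omega⟩ ⟨by omega, by omega⟩ (by simpa using hxy)
  have hrs : StrictMono fun x : Fin m => r (m - x) := fun x y hxy =>
    hr ⟨by omega, by omega⟩ ⟨by omega, by omega⟩ (by have : (x : ℕ) < y := hxy; omega)
  have hKs_mem (x : Fin m) : K (x + 1) ∈ s := by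
    simpa [s] using hKr (⟨by omega, by omega⟩ : (x : ℕ) + 1 ∈ Set.Icc 1 m)
  have hrs_mem (x : Fin m) : r (m - x) ∈ s :=
    Finset.mem_image_of_mem r (Finset.mem_Icc.2 ⟨by omega, by omega⟩)
  -- Both are increasing enumerations of the `m`-element set `s`.
  have hKr_eq := (Finset.orderEmbOfFin_unique hs hKs_mem hKs).trans
    (Finset.orderEmbOfFin_unique hs hrs_mem hrs).symm
  obtain ⟨hi1, him⟩ := hi
  have := congrFun hKr_eq ⟨m - i, by omega⟩
  simp only at this
  rw [Nat.sub_add_comm him, this, Nat.sub_sub_self him]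

theorem strictMonoOn_sum_Icc {m : ℕ} {k : ℕ → ℕ} (hk : ∀ i ∈ Finset.Icc 1 m, 0 < k i) :
    StrictMonoOn (fun i => ∑ j ∈ Finset.Icc 1 i, k j) (Set.Iic m) :=
  strictMonoOn_of_lt_succ Set.ordConnected_Iic fun i _ _ hi => by
    rw [Order.succ_eq_add_one, Finset.sum_Icc_succ_top (by omega)]
    exact Nat.lt_add_of_pos_right (hk _ (Finset.mem_Icc.2 ⟨by omega, hi⟩))

theorem ncard_setOf_le_eq_sum {ι : Type*} {α : ι → ℕ} {m : ℕ} {r k : ℕ → ℕ}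
    (hr : StrictAntiOn r (Set.Icc 1 m)) (hrpos : ∀ i ∈ Finset.Icc 1 m, 0 < r i)
    (hk : ∀ i ∈ Finset.Icc 1 m, 0 < k i)
    (hparts : ∀ t, α t ≠ 0 → ∃ i ∈ Finset.Icc 1 m, α t = r i)
    (hmult : ∀ i ∈ Finset.Icc 1 m, Set.ncard {t | α t = r i} = k i)
    {i : ℕ} (hi : i ∈ Finset.Icc 1 m) :
    {t | r i ≤ α t}.ncard = ∑ j ∈ Finset.Icc 1 i, k j := by
  have hi' : i ∈ Set.Icc 1 m := Finset.mem_Icc.1 hi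
  have hsub : Set.Icc 1 i ⊆ Set.Icc 1 m := Set.Icc_subset_Icc_right hi'.2
  have hlevel : {t | r i ≤ α t} = ⋃ j ∈ Set.Icc 1 i, {t | α t = r j} := by
    ext t
    simp only [Set.mem_ofPred_eq, Set.mem_iUnion, exists_prop]
    constructor
    · intro ht
      obtain ⟨j, hj, hαt⟩ := hparts t (by have := hrpos i hi; omega)
      refine ⟨j, ⟨(Finset.mem_Icc.1 hj).1, ?_⟩, hαt⟩
      by_contra! hij
      have := hr hi' (Finset.mem_Icc.1 hj) hij
      omega
    · rintro ⟨j, hj, hαt⟩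
      exact hαt ▸ hr.antitoneOn (hsub hj) hi' hj.2
  have hfin : ∀ j ∈ Set.Icc 1 i, {t | α t = r j}.Finite := fun j hj =>
    Set.finite_of_ncard_pos ((hmult j (Finset.mem_Icc.2 (hsub hj))).symm ▸
      hk j (Finset.mem_Icc.2 (hsub hj)))
  have hdisj : (Set.Icc 1 i).PairwiseDisjoint fun j => {t | α t = r j} :=
    fun a ha b hb hab => Set.disjoint_left.2 fun t hta htb =>
      hab (hr.injOn (hsub ha) (hsub hb) (hta.symm.trans htb))
  rw [hlevel, (Set.finite_Icc 1 i).ncard_biUnion hfin hdisj, ← Finset.coe_Icc,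
    finsum_mem_coe_finset]
  exact Finset.sum_congr rfl fun j hj =>
    hmult j (Finset.mem_Icc.2 (hsub (Finset.mem_Icc.1 hj)))

theorem conjPart_sub_one_eq_sum {α : ℕ → ℕ} {m : ℕ} {r k : ℕ → ℕ}
    (hr : StrictAntiOn r (Set.Icc 1 m)) (hrpos : ∀ i ∈ Finset.Icc 1 m, 0 < r i)
    (hk : ∀ i ∈ Finset.Icc 1 m, 0 < k i)
    (hparts : ∀ t, α t ≠ 0 → ∃ i ∈ Finset.Icc 1 m, α t = r i)
    (hmult : ∀ i ∈ Finset.Icc 1 m, Set.ncard {t | α t = r i} = k i)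
    {i : ℕ} (hi : i ∈ Finset.Icc 1 m) :
    conjPart α (r i - 1) = ∑ j ∈ Finset.Icc 1 i, k j := by
  have hlevel : {t | r i - 1 < α t} = {t | r i ≤ α t} := by
    ext t
    have := hrpos i hi
    simp only [Set.mem_ofPred_eq]
    omega
  rw [conjPart, hlevel, ncard_setOf_le_eq_sum hr hrpos hk hparts hmult hi]

theorem sub_eq_of_eq_sum_Icc_rev {m : ℕ} {r k : ℕ → ℕ}
    (h : ∀ i ∈ Finset.Icc 1 (m + 1), r i = ∑ j ∈ Finset.Icc 1 (m + 1 - i), k j)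
    {i : ℕ} (hi : i ∈ Finset.Icc 1 m) :
    k i = r (m - i + 1) - r (m - i + 2) := by
  obtain ⟨hi1, him⟩ := Finset.mem_Icc.1 hi
  rw [h _ (Finset.mem_Icc.2 ⟨by omega, by omega⟩), h _ (Finset.mem_Icc.2 ⟨by omega, by omega⟩),
    show m + 1 - (m - i + 1) = i - 1 + 1 by omega, show m + 1 - (m - i + 2) = i - 1 by omega,
    Finset.sum_Icc_succ_top (by omega), Nat.sub_add_cancel hi1, Nat.add_sub_cancel_left]

theorem stmt_14_general (m : ℕ) (α : ℕ → ℕ) (r k : ℕ → ℕ)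
    (hsc : conjPart α = α)
    (hr : StrictAntiOn r (Set.Icc 1 m)) (hrpos : ∀ i ∈ Finset.Icc 1 m, 0 < r i)
    (hr0 : r (m + 1) = 0)
    (hk : ∀ i ∈ Finset.Icc 1 m, 0 < k i)
    (hparts : ∀ t, α t ≠ 0 → ∃ i ∈ Finset.Icc 1 m, α t = r i)
    (hmult : ∀ i ∈ Finset.Icc 1 m, Set.ncard {t | α t = r i} = k i) :
    (∀ i ∈ Finset.Icc 1 m, r i = ∑ j ∈ Finset.Icc 1 (m - i + 1), k j) ∧
    (∀ i ∈ Finset.Icc 1 m, k i = r (m - i + 1) - r (m - i + 2)) := by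
  set K : ℕ → ℕ := fun i => ∑ j ∈ Finset.Icc 1 i, k j
  have hK : StrictMonoOn K (Set.Iic m) := strictMonoOn_sum_Icc hk
  have hαK : ∀ i ∈ Finset.Icc 1 m, α (r i - 1) = K i := fun i hi => by
    rw [← hsc]
    exact conjPart_sub_one_eq_sum hr hrpos hk hparts hmult hi
  have hKr : Set.MapsTo K (Set.Icc 1 m) (r '' Set.Icc 1 m) := fun i hi => by
    have hαi := hαK i (Finset.mem_Icc.2 hi)
    have hKpos : K 0 < K i := hK (Nat.zero_le m) hi.2 hi.1
    obtain ⟨j, hj, h⟩ := hparts (r i - 1) (hαi ▸ (Nat.zero_le _).trans_lt hKpos).ne'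
    exact ⟨j, Finset.mem_Icc.1 hj, by rw [← h, hαi]⟩
  have hrK : ∀ i ∈ Finset.Icc 1 (m + 1), r i = K (m + 1 - i) := fun i hi => by
    obtain ⟨hi1, him⟩ := Finset.mem_Icc.1 hi
    rcases him.eq_or_lt with rfl | him
    · simp [K, hr0]
    · exact hr.eq_rev_of_mapsTo_image (hK.mono Set.Icc_subset_Iic_self) hKr ⟨hi1, by omega⟩
  refine ⟨fun i hi => ?_, fun i hi => sub_eq_of_eq_sum_Icc_rev hrK hi⟩
  obtain ⟨hi1, him⟩ := Finset.mem_Icc.1 hi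
  rw [hrK i (Finset.mem_Icc.2 ⟨hi1, by omega⟩), Nat.sub_add_comm him]

/-- For a self-conjugate `α = (r₁^{k₁}, …, r_m^{k_m})` (distinct parts `r₁ > ⋯ > r_m`,
multiplicities `kᵢ > 0`, and with `r_{m+1} = 0` by convention):
`rᵢ = k₁ + ⋯ + k_{m-i+1}` and `kᵢ = r_{m-i+1} - r_{m-i+2}` for `1 ≤ i ≤ m`. -/
theorem stmt_14 (n m : ℕ) (α : ℕ → ℕ) (r k : ℕ → ℕ)
    (hα : IsPartitionFun α n) (hsc : conjPart α = α)
    (hr : StrictAntiOn r (Set.Icc 1 m)) (hrpos : ∀ i ∈ Finset.Icc 1 m, 0 < r i)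
    (hr0 : r (m + 1) = 0)
    (hk : ∀ i ∈ Finset.Icc 1 m, 0 < k i)
    (hparts : ∀ t, α t ≠ 0 → ∃ i ∈ Finset.Icc 1 m, α t = r i)
    (hmult : ∀ i ∈ Finset.Icc 1 m, Set.ncard {t | α t = r i} = k i) :
    (∀ i ∈ Finset.Icc 1 m, r i = ∑ j ∈ Finset.Icc 1 (m - i + 1), k j) ∧
    (∀ i ∈ Finset.Icc 1 m, k i = r (m - i + 1) - r (m - i + 2)) :=
  stmt_14_general m α r k hsc hr hrpos hr0 hk hparts hmult
end

section
/- Let α be a partition of n and h a positive integer. The h-weight w_h(α), defined as the maximum number of h-hooks that can be successively removed from α, equals the number of nodes (i,j) of α whose hook length h^α_{i,j} is divisible by h. -/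
open scoped Classical

/-!
Encode `α` by its beta-set `B = {α i - i}` of beads on an abacus. The numbers `j + 1 - α'ⱼ`
(`α'` the conjugate partition) fill the complement of `B`, and the node `(i, j)` corresponds to the
bead–gap pair `(α i - i, j + 1 - α'ⱼ)`, whose difference is its hook length. So the nodes with
hook length divisible by `h` are counted by the pairs (bead `b`, gap `g < b`) with `h ∣ b - g`.

Removing an `h`-hook moves a bead from `x` to the gap `x - h`. The transposition of `x` and `x - h`
preserves residues mod `h` and the order of every other pair inside a residue class, so it matches
the pairs after the move with the pairs before it, except `(x, x - h)`: each removal lowers the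
count by exactly one. Conversely, while such a pair exists, walking down from its bead in steps of
`h` reaches a bead with a gap `h` below it, i.e. a removable `h`-hook; so greedy removal attains
the count.
-/

theorem eq_Iio_ncard_of_isLowerSet {s : Set ℕ} (hs : s.Finite) (hl : IsLowerSet s) :
    s = Set.Iio s.ncard := by
  obtain h | ⟨a, rfl⟩ := hl.eq_univ_or_Iio
  · exact absurd (h ▸ hs) Set.infinite_univ
  · rw [Set.ncard_Iio_nat]

def IsPartitionShape (α : ℕ → ℕ) : Prop :=
  Antitone α ∧ (Function.support α).Finite

theorem IsPartitionFun.isPartitionShape {α : ℕ → ℕ} {n : ℕ} (hα : IsPartitionFun α n) :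
    IsPartitionShape α :=
  ⟨hα.1, hα.2.1⟩

section Shape

variable {α : ℕ → ℕ}

theorem finite_setOf_lt_apply (hα : IsPartitionShape α) (j : ℕ) : {i | j < α i}.Finite :=
  hα.2.subset fun i (hi : j < α i) => Function.mem_support.2 (by omega)

theorem lt_conjPart_iff (hα : IsPartitionShape α) {i j : ℕ} : i < conjPart α j ↔ j < α i := by
  have hcol : {i | j < α i} = Set.Iio (conjPart α j) :=
    eq_Iio_ncard_of_isLowerSet (finite_setOf_lt_apply hα j)
      fun a b hba ha => lt_of_lt_of_le ha (hα.1 hba)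
  exact (Set.ext_iff.1 hcol i).symm

theorem conjPart_antitone (hα : IsPartitionShape α) : Antitone (conjPart α) :=
  fun a _ hab => Set.ncard_le_ncard (fun i (hi : _ < _) => (lt_of_le_of_lt hab hi : a < α i))
    (finite_setOf_lt_apply hα a)

theorem finite_cells (hα : IsPartitionShape α) : {p : ℕ × ℕ | p.2 < α p.1}.Finite := by
  refine (hα.2.prod (Set.finite_Iio (α 0))).subset fun p (hp : p.2 < α p.1) => ⟨?_, ?_⟩
  · exact Function.mem_support.2 (by omega)
  · exact lt_of_lt_of_le hp (hα.1 (Nat.zero_le _))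

end Shape

section BetaNumbers

variable {α : ℕ → ℕ}

def betaNum (α : ℕ → ℕ) (i : ℕ) : ℤ := α i - i

noncomputable def gapNum (α : ℕ → ℕ) (j : ℕ) : ℤ := j + 1 - conjPart α j

def betaSet (α : ℕ → ℕ) : Set ℤ := Set.range (betaNum α)

theorem betaNum_strictAnti (hA : Antitone α) : StrictAnti (betaNum α) :=
  strictAnti_nat_of_succ_lt fun i => by
    have := hA (Nat.le_add_right i 1)
    simp only [betaNum]; push_cast; omega

theorem gapNum_injective (hα : IsPartitionShape α) : Function.Injective (gapNum α) := by
  have hmono : StrictMono (gapNum α) := strictMono_nat_of_lt_succ fun j => by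
    have := conjPart_antitone hα (Nat.le_add_right j 1)
    simp only [gapNum]; push_cast; omega
  exact hmono.injective

theorem hookLen_eq_betaNum_sub_gapNum (hα : IsPartitionShape α) {i j : ℕ} (hij : j < α i) :
    (hookLen α i j : ℤ) = betaNum α i - gapNum α j := by
  have := (lt_conjPart_iff hα).2 hij
  simp only [hookLen, betaNum, gapNum]
  omega

theorem gapNum_lt_betaNum_iff (hα : IsPartitionShape α) {i j : ℕ} :
    gapNum α j < betaNum α i ↔ j < α i := by
  have := (lt_conjPart_iff hα (i := i) (j := j))
  simp only [betaNum, gapNum]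
  omega

theorem betaNum_ne_gapNum (hα : IsPartitionShape α) (i j : ℕ) : betaNum α i ≠ gapNum α j := by
  have := (lt_conjPart_iff hα (i := i) (j := j))
  simp only [betaNum, gapNum]
  omega

theorem gapNum_notMem_betaSet (hα : IsPartitionShape α) (j : ℕ) : gapNum α j ∉ betaSet α :=
  fun ⟨i, hi⟩ => betaNum_ne_gapNum hα i j hi

/-- If the beads above `z` are those of the first `c` rows, `z` is the gap number of
column `z + c - 1`. -/
theorem exists_gapNum_eq (hα : IsPartitionShape α) {z : ℤ} (hz : z ∉ betaSet α) :
    ∃ j, gapNum α j = z := by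
  have hbeta (i : ℕ) : betaNum α i ≠ z := fun h => hz ⟨i, h⟩
  have hI : {i | z < betaNum α i} = Set.Iio {i | z < betaNum α i}.ncard := by
    refine eq_Iio_ncard_of_isLowerSet ?_ fun a b hba hb =>
      lt_of_lt_of_le hb ((betaNum_strictAnti hα.1).antitone hba)
    refine (Set.finite_Iio (α 0 - z).toNat).subset fun i (hi : z < betaNum α i) => ?_
    have := hα.1 (Nat.zero_le i)
    simp only [betaNum] at hi
    simp only [Set.mem_Iio]
    omega
  set c := {i | z < betaNum α i}.ncard
  have hmem (i : ℕ) : z < betaNum α i ↔ i < c := Set.ext_iff.1 hI i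
  have hc : betaNum α c < z := by have := hmem c; have := hbeta c; omega
  have hzc : 0 ≤ z + c - 1 := by simp only [betaNum] at hc ⊢; omega
  refine ⟨(z + c - 1).toNat, ?_⟩
  have hconj : conjPart α (z + c - 1).toNat = c := by
    have hcol : {i | (z + c - 1).toNat < α i} = Set.Iio c := by
      ext i
      change (z + c - 1).toNat < α i ↔ i < c
      by_cases hic : i < c
      · refine iff_of_true ?_ hic
        have hlast := (hmem (c - 1)).2 (by omega)
        have := hα.1 (show i ≤ c - 1 by omega)
        simp only [betaNum] at hlast
        omega
      · refine iff_of_false ?_ hic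
        have := hα.1 (show c ≤ i by omega)
        simp only [betaNum] at hc
        omega
    rw [conjPart, hcol, Set.ncard_Iio_nat]
  simp only [gapNum, hconj]
  omega

end BetaNumbers

def dvdInversions (h : ℤ) (B : Set ℤ) : Set (ℤ × ℤ) :=
  {q | q.1 ∈ B ∧ q.2 ∉ B ∧ q.2 < q.1 ∧ h ∣ q.1 - q.2}

def hookDvdNodes (h : ℕ) (α : ℕ → ℕ) : Set (ℕ × ℕ) :=
  {p | p.2 < α p.1 ∧ h ∣ hookLen α p.1 p.2}

section Counting

variable {α : ℕ → ℕ}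

theorem image_hookDvdNodes (hα : IsPartitionShape α) (h : ℕ) :
    (fun p : ℕ × ℕ => (betaNum α p.1, gapNum α p.2)) '' hookDvdNodes h α =
      dvdInversions h (betaSet α) := by
  ext ⟨a, b⟩
  constructor
  · rintro ⟨⟨i, j⟩, ⟨hij, hdvd⟩, he⟩
    obtain ⟨rfl, rfl⟩ := Prod.ext_iff.1 he
    refine ⟨⟨i, rfl⟩, gapNum_notMem_betaSet hα j, (gapNum_lt_betaNum_iff hα).2 hij, ?_⟩
    rw [← hookLen_eq_betaNum_sub_gapNum hα hij]
    exact Int.natCast_dvd_natCast.2 hdvd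
  · rintro ⟨⟨i, rfl⟩, hb, hlt, hdvd⟩
    obtain ⟨j, rfl⟩ := exists_gapNum_eq hα hb
    have hij := (gapNum_lt_betaNum_iff hα).1 hlt
    rw [← hookLen_eq_betaNum_sub_gapNum hα hij] at hdvd
    exact ⟨(i, j), ⟨hij, Int.natCast_dvd_natCast.1 hdvd⟩, rfl⟩

theorem ncard_hookDvdNodes (hα : IsPartitionShape α) (h : ℕ) :
    (hookDvdNodes h α).ncard = (dvdInversions h (betaSet α)).ncard := by
  have hinj : Function.Injective fun p : ℕ × ℕ => (betaNum α p.1, gapNum α p.2) :=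
    (betaNum_strictAnti hα.1).injective.prodMap (gapNum_injective hα)
  rw [← image_hookDvdNodes hα h, Set.ncard_image_of_injective _ hinj]

theorem finite_dvdInversions_betaSet (hα : IsPartitionShape α) (h : ℕ) :
    (dvdInversions h (betaSet α)).Finite := by
  rw [← image_hookDvdNodes hα h]
  exact ((finite_cells hα).subset fun _ hp => hp.1).image _

end Counting

section Abacus

theorem mem_insert_sdiff_iff_swap_mem {β : Type*} [DecidableEq β] {B : Set β} {x y : β}
    (hx : x ∈ B) (hy : y ∉ B) (z : β) : z ∈ insert y (B \ {x}) ↔ Equiv.swap x y z ∈ B := by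
  have hxy : x ≠ y := ne_of_mem_of_not_mem hx hy
  rw [Equiv.swap_apply_def]
  split_ifs with hzx hzy
  · subst hzx
    simp [hy, hxy]
  · subst hzy
    simp [hx]
  · simp [hzx, hzy]

theorem dvd_swap_sub_swap_iff (h x a b : ℤ) :
    h ∣ Equiv.swap x (x - h) a - Equiv.swap x (x - h) b ↔ h ∣ a - b := by
  have hmove (c : ℤ) : h ∣ Equiv.swap x (x - h) c - c := by
    rw [Equiv.swap_apply_def]
    split_ifs with h1 h2
    · exact ⟨-1, by rw [h1]; ring⟩
    · exact ⟨1, by rw [h2]; ring⟩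
    · exact ⟨0, by ring⟩
  have hsplit : Equiv.swap x (x - h) a - Equiv.swap x (x - h) b =
      (a - b) + ((Equiv.swap x (x - h) a - a) - (Equiv.swap x (x - h) b - b)) := by ring
  rw [hsplit, dvd_add_left (dvd_sub (hmove a) (hmove b))]

/-- Swapping `x` with `x - h` exchanges two neighbours within one residue class mod `h`, so it
preserves the order of any other pair in that class. -/
theorem swap_lt_swap_iff_of_dvd {h x a b : ℤ} (hdvd : h ∣ a - b) (hab : (a, b) ≠ (x, x - h))
    (hba : (a, b) ≠ (x - h, x)) :
    Equiv.swap x (x - h) b < Equiv.swap x (x - h) a ↔ b < a := by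
  have hgap : b < a → h ≤ a - b ∧ -h ≤ a - b := fun hlt =>
    ⟨Int.le_of_dvd (by omega) hdvd, Int.le_of_dvd (by omega) (neg_dvd.2 hdvd)⟩
  have hgap' : a < b → h ≤ b - a ∧ -h ≤ b - a := fun hlt =>
    ⟨Int.le_of_dvd (by omega) (dvd_sub_comm.1 hdvd),
      Int.le_of_dvd (by omega) (neg_dvd.2 (dvd_sub_comm.1 hdvd))⟩
  simp only [ne_eq, Prod.ext_iff, not_and] at hab hba
  rw [Equiv.swap_apply_def, Equiv.swap_apply_def]
  split_ifs <;> omega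

theorem dvdInversions_moveBead {h x : ℤ} {B : Set ℤ} (hh : 0 < h) (hx : x ∈ B)
    (hxh : x - h ∉ B) :
    dvdInversions h (insert (x - h) (B \ {x})) =
      Prod.map (Equiv.swap x (x - h)) (Equiv.swap x (x - h)) ⁻¹'
        (dvdInversions h B \ {(x, x - h)}) := by
  ext ⟨a, b⟩
  simp only [dvdInversions, Set.mem_preimage, Prod.map, Set.mem_sdiff, Set.mem_ofPred_eq,
    Set.mem_singleton_iff, mem_insert_sdiff_iff_swap_mem hx hxh, dvd_swap_sub_swap_iff]
  by_cases hab : (a, b) = (x, x - h)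
  · simp only [Prod.ext_iff] at hab
    obtain ⟨rfl, rfl⟩ := hab
    simp [hxh]
  by_cases hba : (a, b) = (x - h, x)
  · simp only [Prod.ext_iff] at hba
    obtain ⟨rfl, rfl⟩ := hba
    simp only [Equiv.swap_apply_right, Equiv.swap_apply_left]
    constructor
    · rintro ⟨-, -, hlt, -⟩; omega
    · rintro ⟨-, hne⟩; exact absurd trivial hne
  have hswap : (Equiv.swap x (x - h) a, Equiv.swap x (x - h) b) ≠ (x, x - h) := by
    simpa only [ne_eq, Prod.ext_iff, Equiv.swap_apply_eq_iff, Equiv.swap_apply_left,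
      Equiv.swap_apply_right] using hba
  simp only [hswap, not_false_eq_true, and_true]
  constructor <;> rintro ⟨hmem, hnotMem, hlt, hdvd⟩ <;> refine ⟨hmem, hnotMem, ?_, hdvd⟩
  · exact (swap_lt_swap_iff_of_dvd hdvd hab hba).2 hlt
  · exact (swap_lt_swap_iff_of_dvd hdvd hab hba).1 hlt

theorem ncard_dvdInversions_moveBead {h x : ℤ} {B : Set ℤ} (hh : 0 < h) (hx : x ∈ B)
    (hxh : x - h ∉ B) (hfin : (dvdInversions h B).Finite) :
    (dvdInversions h (insert (x - h) (B \ {x}))).ncard + 1 = (dvdInversions h B).ncard := by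
  have hswap := (Equiv.swap x (x - h)).bijective
  rw [dvdInversions_moveBead hh hx hxh, Set.ncard_preimage_of_injective_subset_range
    (hswap.injective.prodMap hswap.injective) (by simp [(hswap.prodMap hswap).surjective.range_eq])]
  exact Set.ncard_sdiff_singleton_add_one ⟨hx, hxh, by omega, by simp⟩ hfin

theorem exists_mem_sub_notMem_of_dvdInversions_nonempty {h : ℤ} {B : Set ℤ} (hh : 0 < h)
    (hne : (dvdInversions h B).Nonempty) : ∃ x ∈ B, x - h ∉ B := by
  classical
  obtain ⟨⟨a, b⟩, ha, hb, hlt, m, hm⟩ := hne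
  have hm0 : 0 ≤ m := by
    by_contra! hneg
    nlinarith
  have hex : ∃ k : ℕ, a - h * k ∉ B :=
    ⟨m.toNat, by rwa [Int.toNat_of_nonneg hm0, ← hm, sub_sub_cancel]⟩
  have hk0 : Nat.find hex ≠ 0 := fun h0 => Nat.find_spec hex (by simpa [h0] using ha)
  refine ⟨a - h * (Nat.find hex - 1 : ℕ), not_not.1 (Nat.find_min hex (by omega)), ?_⟩
  convert Nat.find_spec hex using 2
  push_cast [Nat.one_le_iff_ne_zero.2 hk0]
  ring

end Abacus

section RemoveHook

variable {α : ℕ → ℕ} {i j : ℕ}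

theorem IsPartitionShape.removeHook (hα : IsPartitionShape α) (hij : j < α i) :
    IsPartitionShape (removeHook α i j) := by
  have hic := (lt_conjPart_iff hα).2 hij
  refine ⟨antitone_nat_of_succ_le fun t => ?_, ?_⟩
  · have h1 := hα.1 (Nat.le_add_right t 1)
    have h2 := hα.1 (Nat.le_add_right (t + 1) 1)
    have h3 := (lt_conjPart_iff hα (i := t + 1) (j := j))
    have h4 := (lt_conjPart_iff hα (i := t + 1 + 1) (j := j))
    simp only [_root_.removeHook]
    split_ifs <;> omega
  · refine (hα.2.union (Set.finite_Iio (conjPart α j))).subset fun t ht => ?_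
    by_contra hcon
    simp only [Set.mem_union, Function.mem_support, Set.mem_Iio, not_or, not_lt, not_not] at hcon
    simp only [Function.mem_support, _root_.removeHook] at ht
    split_ifs at ht <;> omega

theorem betaNum_removeHook (hα : IsPartitionShape α) (t : ℕ) :
    betaNum (removeHook α i j) t =
      if t < i then betaNum α t
      else if t + 1 < conjPart α j then betaNum α (t + 1)
      else if t + 1 = conjPart α j then gapNum α j
      else betaNum α t := by
  have := (lt_conjPart_iff hα (i := t + 1) (j := j))
  simp only [betaNum, gapNum, _root_.removeHook]
  split_ifs <;> omega

theorem betaSet_removeHook (hα : IsPartitionShape α) (hij : j < α i) :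
    betaSet (removeHook α i j) = insert (gapNum α j) (betaSet α \ {betaNum α i}) := by
  have hic := (lt_conjPart_iff hα).2 hij
  have hinj := (betaNum_strictAnti hα.1).injective
  ext z
  simp only [betaSet, Set.mem_insert_iff, Set.mem_sdiff, Set.mem_range, Set.mem_singleton_iff]
  constructor
  · rintro ⟨t, rfl⟩
    rw [betaNum_removeHook hα]
    split_ifs with h1 h2 h3
    · exact Or.inr ⟨⟨t, rfl⟩, hinj.ne (by omega)⟩
    · exact Or.inr ⟨⟨t + 1, rfl⟩, hinj.ne (by omega)⟩
    · exact Or.inl rfl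
    · exact Or.inr ⟨⟨t, rfl⟩, hinj.ne (by omega)⟩
  · rintro (rfl | ⟨⟨t, rfl⟩, hne⟩)
    · refine ⟨conjPart α j - 1, ?_⟩
      rw [betaNum_removeHook hα, if_neg (by omega), if_neg (by omega), if_pos (by omega)]
    · have hti : t ≠ i := fun h => hne (h ▸ rfl)
      rcases lt_or_gt_of_ne hti with hlt | hgt
      · exact ⟨t, by rw [betaNum_removeHook hα, if_pos hlt]⟩
      · by_cases htc : t < conjPart α j
        · refine ⟨t - 1, ?_⟩
          rw [betaNum_removeHook hα, if_neg (by omega), if_pos (by omega),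
            Nat.sub_add_cancel (by omega)]
        · refine ⟨t, ?_⟩
          rw [betaNum_removeHook hα, if_neg (by omega), if_neg (by omega), if_neg (by omega)]

end RemoveHook

section Weight

variable {α : ℕ → ℕ} {h : ℕ}

theorem ncard_hookDvdNodes_removeHook (hα : IsPartitionShape α) (hh : 0 < h) {i j : ℕ}
    (hij : j < α i) (hlen : hookLen α i j = h) :
    (hookDvdNodes h (removeHook α i j)).ncard + 1 = (hookDvdNodes h α).ncard := by
  have hgap : gapNum α j = betaNum α i - h := by
    have := hookLen_eq_betaNum_sub_gapNum hα hij
    omega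
  rw [ncard_hookDvdNodes (hα.removeHook hij), ncard_hookDvdNodes hα, betaSet_removeHook hα hij,
    hgap]
  exact ncard_dvdInversions_moveBead (by exact_mod_cast hh) ⟨i, rfl⟩
    (hgap ▸ gapNum_notMem_betaSet hα j) (finite_dvdInversions_betaSet hα h)

theorem exists_hookLen_eq_s17 (hα : IsPartitionShape α) (hh : 0 < h)
    (hne : (hookDvdNodes h α).Nonempty) : ∃ i j, j < α i ∧ hookLen α i j = h := by
  obtain ⟨_, ⟨i, rfl⟩, hxh⟩ := exists_mem_sub_notMem_of_dvdInversions_nonempty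
    (by exact_mod_cast hh) (image_hookDvdNodes hα h ▸ hne.image _)
  obtain ⟨j, hj⟩ := exists_gapNum_eq hα hxh
  have hij : j < α i := (gapNum_lt_betaNum_iff hα).1 (by omega)
  have := hookLen_eq_betaNum_sub_gapNum hα hij
  exact ⟨i, j, hij, by omega⟩

def IsHookRemovalSeq (h : ℕ) (f : ℕ → ℕ → ℕ) (c : ℕ) : Prop :=
  ∀ t < c, ∃ i j, j < f t i ∧ hookLen (f t) i j = h ∧ f (t + 1) = removeHook (f t) i j

theorem IsHookRemovalSeq.isPartitionShape_and_ncard_add (hα : IsPartitionShape α) (hh : 0 < h)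
    {f : ℕ → ℕ → ℕ} {c : ℕ} (hf0 : f 0 = α) (hf : IsHookRemovalSeq h f c) :
    IsPartitionShape (f c) ∧ (hookDvdNodes h (f c)).ncard + c = (hookDvdNodes h α).ncard := by
  induction c with
  | zero => rw [hf0]; exact ⟨hα, rfl⟩
  | succ c ih =>
    obtain ⟨hαc, hcard⟩ := ih fun t ht => hf t (by omega)
    obtain ⟨i, j, hij, hlen, hnext⟩ := hf c (by omega)
    have := ncard_hookDvdNodes_removeHook hαc hh hij hlen
    rw [hnext]
    exact ⟨hαc.removeHook hij, by omega⟩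

noncomputable def removeSomeHook (h : ℕ) (α : ℕ → ℕ) : ℕ → ℕ :=
  if hx : ∃ p : ℕ × ℕ, p.2 < α p.1 ∧ hookLen α p.1 p.2 = h then
    removeHook α hx.choose.1 hx.choose.2
  else α

theorem isHookRemovalSeq_iterate_removeSomeHook (hα : IsPartitionShape α) (hh : 0 < h) {c : ℕ}
    (hc : c ≤ (hookDvdNodes h α).ncard) :
    IsHookRemovalSeq h (fun t => (removeSomeHook h)^[t] α) c := by
  induction c with
  | zero => exact fun t ht => absurd ht (Nat.not_lt_zero t)
  | succ c ih =>
    have ih := ih (by omega)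
    intro t ht
    rcases Nat.lt_succ_iff_lt_or_eq.1 ht with ht | rfl
    · exact ih t ht
    obtain ⟨hαt, hcard⟩ := ih.isPartitionShape_and_ncard_add hα hh rfl
    obtain ⟨i, j, hij, hlen⟩ := exists_hookLen_eq_s17 hαt hh (Set.nonempty_of_ncard_ne_zero (by omega))
    have hx : ∃ p : ℕ × ℕ, p.2 < (removeSomeHook h)^[t] α p.1 ∧
        hookLen ((removeSomeHook h)^[t] α) p.1 p.2 = h := ⟨(i, j), hij, hlen⟩
    dsimp only
    refine ⟨hx.choose.1, hx.choose.2, hx.choose_spec.1, hx.choose_spec.2, ?_⟩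
    rw [Function.iterate_succ_apply', removeSomeHook, dif_pos hx]

end Weight

/-- The `h`-weight of `α` (the maximum number of `h`-hooks that can be successively
removed from `α`) equals the number of nodes of `α` with hook length divisible by `h`. -/
theorem stmt_17 (n : ℕ) (α : ℕ → ℕ) (hα : IsPartitionFun α n) (h : ℕ) (hh : 0 < h) :
    IsGreatest {c : ℕ | ∃ f : ℕ → ℕ → ℕ, f 0 = α ∧
        ∀ t < c, ∃ i j, j < f t i ∧ hookLen (f t) i j = h ∧
          f (t + 1) = removeHook (f t) i j}
      (Set.ncard {p : ℕ × ℕ | p.2 < α p.1 ∧ h ∣ hookLen α p.1 p.2}) := by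
  have hshape := hα.isPartitionShape
  refine ⟨⟨_, rfl, isHookRemovalSeq_iterate_removeSomeHook hshape hh le_rfl⟩, ?_⟩
  rintro c ⟨f, hf0, hf⟩
  have := (IsHookRemovalSeq.isPartitionShape_and_ncard_add hshape hh hf0 hf).2
  change c ≤ (hookDvdNodes h α).ncard
  omega
end

section
/- Let α be a self-conjugate partition of n with at least two rows and two columns. Then h^α_{1,1} > h^α_{1,2} = h^α_{2,1} > h^α_{i,j} for all nodes (i,j) ∉ {(1,1),(1,2),(2,1)}, and 2·h^α_{1,2} ≤ n. -/
open scoped Classical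

/-! Self-conjugacy makes the hook length at `(i, j)` equal to `α i - j + α j - i - 1`, so the
comparisons reduce to `α i ≤ α 1 ≤ α 0` for `i ≥ 1`. For the bound on `n`, the first two columns
hold `α 0 + α 1` cells and the first two rows hold `(α 0 - 2) + (α 1 - 2)` further ones. -/

section Partition

variable {α : ℕ → ℕ}

theorem lt_conjPart_iff_s18 (hmono : Antitone α) (hfin : (Function.support α).Finite) {i j : ℕ} :
    i < conjPart α j ↔ j < α i := by
  have hS : {k | j < α k}.Finite := hfin.subset fun k (hk : j < α k) => by
    simp only [Function.mem_support]; omega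
  constructor
  · intro hi
    by_contra! hαi
    have hsub : {k | j < α k} ⊆ Set.Iio i := fun k (hk : j < α k) => by
      by_contra hik
      exact (hk.trans_le (hmono (not_lt.mp hik))).not_ge hαi
    have := Set.ncard_le_ncard hsub (Set.finite_Iio i)
    rw [← Finset.coe_Iio, Set.ncard_coe_finset, Nat.card_Iio] at this
    exact (hi.trans_le this).false
  · intro hj
    have hsub : Set.Iic i ⊆ {k | j < α k} := fun k (hk : k ≤ i) => hj.trans_le (hmono hk)
    have := Set.ncard_le_ncard hsub hS
    rwa [← Finset.coe_Iic, Set.ncard_coe_finset, Nat.card_Iic] at this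

theorem finsum_eq_sum_range_conjPart_zero (hmono : Antitone α)
    (hfin : (Function.support α).Finite) :
    ∑ᶠ i, α i = ∑ i ∈ Finset.range (conjPart α 0), α i := by
  refine finsum_eq_sum_of_support_subset α fun k hk => ?_
  rw [Finset.coe_range, Set.mem_Iio, lt_conjPart_iff_s18 hmono hfin]
  exact Nat.pos_of_ne_zero hk

end Partition

theorem add_le_sum_range {f : ℕ → ℕ} {a b : ℕ} (hba : b ≤ a) (hpos : ∀ i < a, 1 ≤ f i)
    (htwo : ∀ i < b, 2 ≤ f i) : a + b ≤ ∑ i ∈ Finset.range a, f i := by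
  rw [← Finset.sum_range_add_sum_Ico f hba]
  have hhead : b • 2 ≤ ∑ i ∈ Finset.range b, f i := by
    simpa using Finset.card_nsmul_le_sum _ _ 2 fun i hi => htwo i (Finset.mem_range.mp hi)
  have htail : (a - b) • 1 ≤ ∑ i ∈ Finset.Ico b a, f i := by
    simpa using Finset.card_nsmul_le_sum _ _ 1 fun i hi => hpos i (Finset.mem_Ico.mp hi).2
  simp only [smul_eq_mul] at hhead htail
  omega

section SelfConjugate

variable {α : ℕ → ℕ} (hmono : Antitone α) (hfin : (Function.support α).Finite)
  (hsc : conjPart α = α)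
include hmono hfin hsc

theorem lt_apply_comm {i j : ℕ} : j < α i ↔ i < α j := by
  rw [← lt_conjPart_iff_s18 hmono hfin, hsc]

theorem hookLen_lt_hookLen_zero_one {i j : ℕ} (hj : j < α i) (h00 : ¬(i = 0 ∧ j = 0))
    (h01 : ¬(i = 0 ∧ j = 1)) (h10 : ¬(i = 1 ∧ j = 0)) : hookLen α i j < hookLen α 0 1 := by
  have hi : i < α j := (lt_apply_comm hmono hfin hsc).mp hj
  have hαi : i = 0 ∨ α i ≤ α 1 := (Nat.eq_zero_or_pos i).imp_right fun h => hmono h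
  have hαj : j = 0 ∨ α j ≤ α 1 := (Nat.eq_zero_or_pos j).imp_right fun h => hmono h
  have hα10 : α 1 ≤ α 0 := hmono zero_le_one
  simp only [hookLen, hsc]
  rcases hαi with rfl | hαi <;> rcases hαj with rfl | hαj <;> omega

theorem two_mul_hookLen_zero_one_le (hcols : 2 ≤ α 0) :
    2 * hookLen α 0 1 ≤ ∑ᶠ i, α i := by
  rw [finsum_eq_sum_range_conjPart_zero hmono hfin, hsc]
  have hcolumns : α 0 + α 1 ≤ ∑ i ∈ Finset.range (α 0), min (α i) 2 :=
    add_le_sum_range (hmono zero_le_one)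
      (fun i hi => le_min ((lt_apply_comm hmono hfin hsc).mp hi) one_le_two)
      (fun i hi => le_min ((lt_apply_comm hmono hfin hsc).mp hi) le_rfl)
  have hrows : ∑ i ∈ Finset.range 2, (α i - 2) ≤ ∑ i ∈ Finset.range (α 0), (α i - 2) :=
    Finset.sum_le_sum_of_subset (Finset.range_subset_range.mpr hcols)
  have hsplit : ∑ i ∈ Finset.range (α 0), α i =
      ∑ i ∈ Finset.range (α 0), min (α i) 2 + ∑ i ∈ Finset.range (α 0), (α i - 2) := by
    rw [← Finset.sum_add_distrib]
    exact Finset.sum_congr rfl fun i _ => by omega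
  simp only [Finset.sum_range_succ, Finset.sum_range_zero] at hrows
  simp only [hookLen, hsc]
  omega

end SelfConjugate

theorem stmt_18_general (n : ℕ) (α : ℕ → ℕ) (hα : IsPartitionFun α n) (hsc : conjPart α = α)
    (hcols : 2 ≤ α 0) :
    hookLen α 0 1 < hookLen α 0 0 ∧ hookLen α 0 1 = hookLen α 1 0 ∧
    (∀ i j, j < α i → ¬(i = 0 ∧ j = 0) → ¬(i = 0 ∧ j = 1) → ¬(i = 1 ∧ j = 0) →
      hookLen α i j < hookLen α 0 1) ∧
    2 * hookLen α 0 1 ≤ n := by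
  obtain ⟨hmono, hfin, rfl⟩ := hα
  have hα10 : α 1 ≤ α 0 := hmono zero_le_one
  refine ⟨?_, ?_, fun i j => hookLen_lt_hookLen_zero_one hmono hfin hsc,
    two_mul_hookLen_zero_one_le hmono hfin hsc hcols⟩
  all_goals simp only [hookLen, hsc]; omega

/-- For a self-conjugate `α` with at least two rows and two columns:
`h_{1,1} > h_{1,2} = h_{2,1} > h_{i,j}` for every other node, and `2·h_{1,2} ≤ n`. -/
theorem stmt_18 (n : ℕ) (α : ℕ → ℕ) (hα : IsPartitionFun α n) (hsc : conjPart α = α)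
    (hrows : 0 < α 1) (hcols : 2 ≤ α 0) :
    hookLen α 0 1 < hookLen α 0 0 ∧ hookLen α 0 1 = hookLen α 1 0 ∧
    (∀ i j, j < α i → ¬(i = 0 ∧ j = 0) → ¬(i = 0 ∧ j = 1) → ¬(i = 1 ∧ j = 0) →
      hookLen α i j < hookLen α 0 1) ∧
    2 * hookLen α 0 1 ≤ n :=
  stmt_18_general n α hα hsc hcols
end
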